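/- Fix ε > 0, λ > 0, an orthogonal matrix σ, and a symmetric matrix ψ with ψ ≥ ε·Id. Define A(M) = σ M (Id + λM)^{−1} σ^{−1} + ψ for symmetric positive semidefinite M. Then A maps the set {M symmetric : M ≥ ε·Id} into itself, and for all M_1, M_2 ≥ ε·Id one has ‖A(M_1) − A(M_2)‖ ≤ (1 + λε)^{−2} ‖M_1 − M_2‖; in particular A is a strict contraction on this set. -/

import Mathlib

open Matrix

section Aux

variable {n : ℕ}

lemma psd_smul {c : ℝ} (hc : 0 ≤ c) {P : Matrix (Fin n) (Fin n) ℝ}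
    (hP : P.PosSemidef) : (c • P).PosSemidef := by
  refine Matrix.PosSemidef.of_dotProduct_mulVec_nonneg ?_ fun x => ?_
  · rw [Matrix.IsHermitian, conjTranspose_smul, star_trivial, hP.1.eq]
  · rw [Matrix.smul_mulVec, dotProduct_smul, smul_eq_mul]
    exact mul_nonneg hc (hP.dotProduct_mulVec_nonneg x)

lemma herm_iff_symm (X : Matrix (Fin n) (Fin n) ℝ) : X.IsHermitian ↔ X.IsSymm := by
  have : Xᴴ = Xᵀ := by ext i j; simp [conjTranspose_apply]
  rw [Matrix.IsHermitian, Matrix.IsSymm, this]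

lemma B_posdef {ε lam : ℝ} (hε : 0 < ε) (hlam : 0 < lam)
    {M : Matrix (Fin n) (Fin n) ℝ} (hM : (M - ε • 1).PosSemidef) :
    (1 + lam • M).PosDef := by
  have h1 : (1 : Matrix (Fin n) (Fin n) ℝ) + lam • M
      = (1 + lam * ε) • (1 : Matrix (Fin n) (Fin n) ℝ) + lam • (M - ε • 1) := by
    module
  rw [h1]
  refine Matrix.PosDef.add_posSemidef ?_ (psd_smul hlam.le hM)
  rw [Matrix.smul_one_eq_diagonal]
  exact Matrix.posDef_diagonal_iff.mpr fun i => by positivity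

lemma M_psd {ε : ℝ} (hε : 0 < ε) {M : Matrix (Fin n) (Fin n) ℝ}
    (hM : (M - ε • 1).PosSemidef) : M.PosSemidef := by
  have h : M = (M - ε • 1) + ε • (1 : Matrix (Fin n) (Fin n) ℝ) := by module
  rw [h]
  refine hM.add ?_
  rw [Matrix.smul_one_eq_diagonal]
  exact Matrix.posSemidef_diagonal_iff.mpr fun i => hε.le

lemma mul_inv_psd {lam : ℝ} (hlam : 0 < lam) {M : Matrix (Fin n) (Fin n) ℝ}
    (hM : M.PosSemidef) (hBd : IsUnit (1 + lam • M).det) :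
    (M * (1 + lam • M)⁻¹).PosSemidef := by
  set B : Matrix (Fin n) (Fin n) ℝ := 1 + lam • M with hBdef
  have hBh : B.IsHermitian := by
    refine Matrix.isHermitian_one.add ?_
    rw [Matrix.IsHermitian, conjTranspose_smul, star_trivial, hM.1.eq]
  have h1 : M * B = B * M := by
    simp [hBdef, mul_add, add_mul, Matrix.mul_smul, Matrix.smul_mul]
  have hcomm : M * B⁻¹ = B⁻¹ * M := by
    calc M * B⁻¹ = B⁻¹ * (B * M) * B⁻¹ := by
          rw [← Matrix.mul_assoc, Matrix.nonsing_inv_mul _ hBd, Matrix.one_mul]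
      _ = B⁻¹ * (M * B) * B⁻¹ := by rw [h1]
      _ = B⁻¹ * M := by
          rw [← Matrix.mul_assoc, Matrix.mul_assoc (B⁻¹ * M) B B⁻¹,
            Matrix.mul_nonsing_inv _ hBd, Matrix.mul_one]
  refine Matrix.PosSemidef.of_dotProduct_mulVec_nonneg ?_ fun x => ?_
  · rw [Matrix.IsHermitian, conjTranspose_mul, Matrix.conjTranspose_nonsing_inv,
      hBh.eq, hM.1.eq, ← hcomm]
  · have hx : x = B *ᵥ (B⁻¹ *ᵥ x) := by
      rw [Matrix.mulVec_mulVec, Matrix.mul_nonsing_inv _ hBd, Matrix.one_mulVec]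
    set y := B⁻¹ *ᵥ x with hy
    have hMy : (M * B⁻¹) *ᵥ x = M *ᵥ y := by rw [← Matrix.mulVec_mulVec]
    have hstar : star x = x := by funext i; simp
    rw [hstar, hMy]
    have hBy : B *ᵥ y = y + lam • (M *ᵥ y) := by
      simp [hBdef, Matrix.add_mulVec, Matrix.one_mulVec, Matrix.smul_mulVec]
    have : x ⬝ᵥ (M *ᵥ y) = y ⬝ᵥ (M *ᵥ y) + lam * ((M *ᵥ y) ⬝ᵥ (M *ᵥ y)) := by
      rw [hx, hBy, add_dotProduct, smul_dotProduct, smul_eq_mul]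
    rw [this]
    have t1 : (0:ℝ) ≤ y ⬝ᵥ (M *ᵥ y) := by
      have := hM.dotProduct_mulVec_nonneg y
      rwa [show star y = y from by funext i; simp] at this
    have t2 : (0:ℝ) ≤ (M *ᵥ y) ⬝ᵥ (M *ᵥ y) := by
      have := dotProduct_star_self_nonneg (M *ᵥ y)
      rwa [show star (M *ᵥ y) = M *ᵥ y from by funext i; simp] at this
    positivity

lemma key_identity {lam : ℝ} (hlam : lam ≠ 0) {M1 M2 : Matrix (Fin n) (Fin n) ℝ}
    (h1 : IsUnit (1 + lam • M1).det) (h2 : IsUnit (1 + lam • M2).det) :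
    M1 * (1 + lam • M1)⁻¹ - M2 * (1 + lam • M2)⁻¹
      = (1 + lam • M2)⁻¹ * (M1 - M2) * (1 + lam • M1)⁻¹ := by
  set B1 : Matrix (Fin n) (Fin n) ℝ := 1 + lam • M1 with hB1
  set B2 : Matrix (Fin n) (Fin n) ℝ := 1 + lam • M2 with hB2
  have e : ∀ (M : Matrix (Fin n) (Fin n) ℝ) (B : Matrix (Fin n) (Fin n) ℝ),
      B = 1 + lam • M → IsUnit B.det → M * B⁻¹ = lam⁻¹ • (1 - B⁻¹) := by
    intro M B hB hBd
    have h3 : lam • M = B - 1 := by rw [hB]; abel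
    have h4 : (lam • M) * B⁻¹ = 1 - B⁻¹ := by
      rw [h3, Matrix.sub_mul, Matrix.mul_nonsing_inv _ hBd, Matrix.one_mul]
    calc M * B⁻¹ = lam⁻¹ • ((lam • M) * B⁻¹) := by
          rw [Matrix.smul_mul, smul_smul, inv_mul_cancel₀ hlam, one_smul]
      _ = lam⁻¹ • (1 - B⁻¹) := by rw [h4]
  have e3 : B2⁻¹ - B1⁻¹ = B2⁻¹ * (B1 - B2) * B1⁻¹ := by
    rw [Matrix.mul_sub, Matrix.sub_mul, Matrix.mul_assoc,
      Matrix.mul_nonsing_inv _ h1, Matrix.mul_one, Matrix.nonsing_inv_mul _ h2,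
      Matrix.one_mul]
  have e4 : B1 - B2 = lam • (M1 - M2) := by rw [hB1, hB2, smul_sub]; abel
  rw [e M1 B1 hB1 h1, e M2 B2 hB2 h2, ← smul_sub,
    show (1 - B1⁻¹) - (1 - B2⁻¹) = B2⁻¹ - B1⁻¹ from by abel, e3, e4,
    Matrix.mul_smul, Matrix.smul_mul, smul_smul, inv_mul_cancel₀ hlam, one_smul]

lemma psd_inner_nonneg {P : Matrix (Fin n) (Fin n) ℝ} (hP : P.PosSemidef)
    (x : EuclideanSpace ℝ (Fin n)) :
    0 ≤ (inner ℝ x (Matrix.toEuclideanCLM (𝕜 := ℝ) P x) : ℝ) := by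
  rw [EuclideanSpace.inner_eq_star_dotProduct]
  have h := hP.dotProduct_mulVec_nonneg (WithLp.equiv 2 _ x)
  rw [dotProduct_comm] at h
  simpa using h

lemma unitary_isometry {σ : Matrix (Fin n) (Fin n) ℝ} (h : star σ * σ = 1)
    (x : EuclideanSpace ℝ (Fin n)) :
    ‖Matrix.toEuclideanCLM (𝕜 := ℝ) σ x‖ = ‖x‖ := by
  set T := Matrix.toEuclideanCLM (𝕜 := ℝ) (n := Fin n)
  have h1 : star (T σ) * T σ = 1 := by rw [← map_star, ← _root_.map_mul, h, _root_.map_one]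
  have h2 : (inner ℝ (T σ x) (T σ x) : ℝ) = inner ℝ x x := by
    rw [← ContinuousLinearMap.adjoint_inner_left, ← ContinuousLinearMap.star_eq_adjoint,
      ← ContinuousLinearMap.mul_apply, h1, ContinuousLinearMap.one_apply]
  rw [real_inner_self_eq_norm_mul_norm, real_inner_self_eq_norm_mul_norm] at h2
  exact (mul_self_inj (norm_nonneg _) (norm_nonneg _)).mp h2

lemma norm_inv_le {c : ℝ} (hc : 0 < c) {B : Matrix (Fin n) (Fin n) ℝ}
    (hB : (B - c • 1).PosSemidef) (hBd : IsUnit B.det) :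
    ‖Matrix.toEuclideanCLM (𝕜 := ℝ) B⁻¹‖ ≤ c⁻¹ := by
  set T := Matrix.toEuclideanCLM (𝕜 := ℝ) (n := Fin n)
  have key : ∀ x : EuclideanSpace ℝ (Fin n), c * ‖x‖ ≤ ‖T B x‖ := by
    intro x
    rcases eq_or_ne x 0 with rfl | hx
    · simp
    have h1 : c * ‖x‖ ^ 2 ≤ inner ℝ x (T B x) := by
      have h2 := psd_inner_nonneg hB x
      rw [_root_.map_sub, _root_.map_smul, _root_.map_one, ContinuousLinearMap.sub_apply,
        ContinuousLinearMap.smul_apply, ContinuousLinearMap.one_apply,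
        inner_sub_right, real_inner_smul_right, real_inner_self_eq_norm_sq] at h2
      linarith
    have h3 : (inner ℝ x (T B x) : ℝ) ≤ ‖x‖ * ‖T B x‖ := real_inner_le_norm _ _
    have hxpos : 0 < ‖x‖ := norm_pos_iff.mpr hx
    have := h1.trans h3
    rw [pow_two] at this
    nlinarith
  refine ContinuousLinearMap.opNorm_le_bound _ (by positivity) fun y => ?_
  have h3 : T B (T B⁻¹ y) = y := by
    rw [← ContinuousLinearMap.mul_apply, ← _root_.map_mul, Matrix.mul_nonsing_inv _ hBd,
      _root_.map_one, ContinuousLinearMap.one_apply]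
  have h4 := key (T B⁻¹ y)
  rw [h3] at h4
  rw [inv_mul_eq_div, le_div_iff₀ hc]
  linarith

end Aux

/-- The map `A(M) = σ M (Id + λM)⁻¹ σ⁻¹ + ψ` preserves the set of symmetric matrices
`M ≥ ε·Id` and is a strict contraction on it with constant `(1 + λε)⁻²`. -/
theorem stmt7 (n : ℕ) (ε lam : ℝ) (hε : 0 < ε) (hlam : 0 < lam)
    (σ ψ : Matrix (Fin n) (Fin n) ℝ)
    (hσ : σ ∈ Matrix.orthogonalGroup (Fin n) ℝ)
    (hψs : ψ.IsSymm) (hψ : (ψ - ε • 1).PosSemidef)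
    (A : Matrix (Fin n) (Fin n) ℝ → Matrix (Fin n) (Fin n) ℝ)
    (hA : ∀ M, A M = σ * M * (1 + lam • M)⁻¹ * σ⁻¹ + ψ) :
    (∀ M, M.IsSymm → (M - ε • 1).PosSemidef →
      (A M).IsSymm ∧ (A M - ε • 1).PosSemidef) ∧
    (∀ M1 M2, M1.IsSymm → (M1 - ε • 1).PosSemidef →
      M2.IsSymm → (M2 - ε • 1).PosSemidef →
      ‖Matrix.toEuclideanCLM (𝕜 := ℝ) (A M1 - A M2)‖ ≤
        ((1 + lam * ε) ^ 2)⁻¹ * ‖Matrix.toEuclideanCLM (𝕜 := ℝ) (M1 - M2)‖) := by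
  have hσ1 : star σ * σ = 1 := Matrix.mem_unitaryGroup_iff'.mp hσ
  have hσ2 : σ * star σ = 1 := Matrix.mem_unitaryGroup_iff.mp hσ
  have hσinv : σ⁻¹ = star σ := Matrix.inv_eq_left_inv hσ1
  have hc : (0:ℝ) < 1 + lam * ε := by positivity
  constructor
  · intro M hMs hMp
    have hBpd := B_posdef hε hlam hMp
    have hBd : IsUnit (1 + lam • M).det := isUnit_iff_ne_zero.mpr hBpd.det_pos.ne'
    have hX : (M * (1 + lam • M)⁻¹).PosSemidef := mul_inv_psd hlam (M_psd hε hMp) hBd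
    have hAM : A M = σ * (M * (1 + lam • M)⁻¹) * σᴴ + ψ := by
      rw [hA, hσinv, Matrix.star_eq_conjTranspose, Matrix.mul_assoc σ M]
    constructor
    · rw [← herm_iff_symm, hAM]
      exact (Matrix.isHermitian_mul_mul_conjTranspose σ hX.1).add
        ((herm_iff_symm ψ).mpr hψs)
    · have : A M - ε • 1 = σ * (M * (1 + lam • M)⁻¹) * σᴴ + (ψ - ε • 1) := by
        rw [hAM]; abel
      rw [this]
      exact (hX.mul_mul_conjTranspose_same σ).add hψ
  · intro M1 M2 hs1 hp1 hs2 hp2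
    have hB1pd := B_posdef hε hlam hp1
    have hB2pd := B_posdef hε hlam hp2
    have hBd1 : IsUnit (1 + lam • M1).det := isUnit_iff_ne_zero.mpr hB1pd.det_pos.ne'
    have hBd2 : IsUnit (1 + lam • M2).det := isUnit_iff_ne_zero.mpr hB2pd.det_pos.ne'
    set B1 : Matrix (Fin n) (Fin n) ℝ := 1 + lam • M1 with hB1
    set B2 : Matrix (Fin n) (Fin n) ℝ := 1 + lam • M2 with hB2
    have hdiff : A M1 - A M2 = σ * (B2⁻¹ * (M1 - M2) * B1⁻¹) * σ⁻¹ := by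
      have : A M1 - A M2 = σ * (M1 * B1⁻¹ - M2 * B2⁻¹) * σ⁻¹ := by
        rw [hA, hA]
        simp only [Matrix.mul_sub, Matrix.sub_mul, ← Matrix.mul_assoc]
        abel
      rw [this, key_identity hlam.ne' hBd1 hBd2]
    set T := Matrix.toEuclideanCLM (𝕜 := ℝ) (n := Fin n)
    have hu1 : ∀ x, ‖T σ x‖ = ‖x‖ := unitary_isometry hσ1
    have hu2 : ∀ x, ‖T σ⁻¹ x‖ = ‖x‖ := by
      apply unitary_isometry
      rw [hσinv, star_star, hσ2]
    have hN1 : ‖T B1⁻¹‖ ≤ (1 + lam * ε)⁻¹ := by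
      refine norm_inv_le hc ?_ hBd1
      have : B1 - (1 + lam * ε) • 1 = lam • (M1 - ε • 1) := by rw [hB1]; module
      rw [this]; exact psd_smul hlam.le hp1
    have hN2 : ‖T B2⁻¹‖ ≤ (1 + lam * ε)⁻¹ := by
      refine norm_inv_le hc ?_ hBd2
      have : B2 - (1 + lam * ε) • 1 = lam • (M2 - ε • 1) := by rw [hB2]; module
      rw [this]; exact psd_smul hlam.le hp2
    rw [hdiff]
    have step1 : ‖T (σ * (B2⁻¹ * (M1 - M2) * B1⁻¹) * σ⁻¹)‖
        ≤ ‖T (B2⁻¹ * (M1 - M2) * B1⁻¹)‖ := by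
      rw [_root_.map_mul, _root_.map_mul]
      refine ContinuousLinearMap.opNorm_le_bound _ (norm_nonneg _) fun x => ?_
      rw [ContinuousLinearMap.mul_apply, ContinuousLinearMap.mul_apply, hu1]
      calc ‖T (B2⁻¹ * (M1 - M2) * B1⁻¹) (T σ⁻¹ x)‖
          ≤ ‖T (B2⁻¹ * (M1 - M2) * B1⁻¹)‖ * ‖T σ⁻¹ x‖ :=
            ContinuousLinearMap.le_opNorm _ _
        _ = ‖T (B2⁻¹ * (M1 - M2) * B1⁻¹)‖ * ‖x‖ := by rw [hu2]
    have step2 : ‖T (B2⁻¹ * (M1 - M2) * B1⁻¹)‖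
        ≤ (1 + lam * ε)⁻¹ * (‖T (M1 - M2)‖ * (1 + lam * ε)⁻¹) := by
      rw [_root_.map_mul, _root_.map_mul]
      calc ‖T B2⁻¹ * T (M1 - M2) * T B1⁻¹‖
          ≤ ‖T B2⁻¹ * T (M1 - M2)‖ * ‖T B1⁻¹‖ := norm_mul_le _ _
        _ ≤ ‖T B2⁻¹‖ * ‖T (M1 - M2)‖ * ‖T B1⁻¹‖ :=
            mul_le_mul_of_nonneg_right (norm_mul_le _ _) (norm_nonneg _)
        _ ≤ (1 + lam * ε)⁻¹ * (‖T (M1 - M2)‖ * (1 + lam * ε)⁻¹) := by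
            have h1 : ‖T B2⁻¹‖ * ‖T (M1 - M2)‖ ≤ (1 + lam * ε)⁻¹ * ‖T (M1 - M2)‖ :=
              mul_le_mul_of_nonneg_right hN2 (norm_nonneg _)
            have h2 : ‖T B2⁻¹‖ * ‖T (M1 - M2)‖ * ‖T B1⁻¹‖
                ≤ ((1 + lam * ε)⁻¹ * ‖T (M1 - M2)‖) * ‖T B1⁻¹‖ :=
              mul_le_mul_of_nonneg_right h1 (norm_nonneg _)
            have h3 : ((1 + lam * ε)⁻¹ * ‖T (M1 - M2)‖) * ‖T B1⁻¹‖
                ≤ ((1 + lam * ε)⁻¹ * ‖T (M1 - M2)‖) * (1 + lam * ε)⁻¹ :=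
              mul_le_mul_of_nonneg_left hN1 (by positivity)
            calc ‖T B2⁻¹‖ * ‖T (M1 - M2)‖ * ‖T B1⁻¹‖
                ≤ ((1 + lam * ε)⁻¹ * ‖T (M1 - M2)‖) * (1 + lam * ε)⁻¹ := h2.trans h3
              _ = (1 + lam * ε)⁻¹ * (‖T (M1 - M2)‖ * (1 + lam * ε)⁻¹) := by ring
    calc ‖T (σ * (B2⁻¹ * (M1 - M2) * B1⁻¹) * σ⁻¹)‖
        ≤ (1 + lam * ε)⁻¹ * (‖T (M1 - M2)‖ * (1 + lam * ε)⁻¹) := step1.trans step2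
      _ = ((1 + lam * ε) ^ 2)⁻¹ * ‖T (M1 - M2)‖ := by
          rw [pow_two, mul_inv]; ring
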